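/- arXiv:1911.12060 — 6 statements merged into one kernel-verified Lean document; each statement's English description precedes it below -/
import Mathlib

section
/- Let ε ≥ 0.01, let 0 < δ ≤ 0.05, let Δ > 0, and let a be a real number satisfying erfc(a) − e^ε · erfc(√(a² + ε)) = 2δ. Then (a + √(a² + ε)) · Δ / (ε·√2) > Δ / √(2ε). (In particular a > 0, so the optimal Gaussian noise amount σ_DP-OPT = (a + √(a² + ε))·Δ/(ε√2) for (ε,δ)-differential privacy exceeds Δ/√(2ε).) -/
/-!
If `a ≤ 0` then `erfc a ≥ 1`, while `√(a² + ε) ≥ 0.1` and the tail bound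
`erfc x < 0.9 e^{-x²}` for `x ≥ 0.1` give `e^ε erfc √(a² + ε) < 0.9 e^{-a²} ≤ 0.9`; the defining
equation would then force `2δ > 0.1`. Hence `a > 0`, so `a + √(a² + ε) > √ε`, which is the claim.

The tail bound comes from `G x = k e^{-x²} - erfc x`: its derivative `(2/√π - 2kx) e^{-x²}` changes
sign once, at `x = 1/(k√π)`, and `G → 0` at infinity, so `G` stays positive to the right of any
point where it is positive.
-/

open Real

/-- The Gauss error function `erf x = (2/√π) ∫₀ˣ e^{−t²} dt`. -/
noncomputable def erf (x : ℝ) : ℝ := 2 / Real.sqrt Real.pi * ∫ t in (0:ℝ)..x, Real.exp (-t ^ 2)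

/-- The complementary error function `erfc x = 1 - erf x`. -/
noncomputable def erfc (x : ℝ) : ℝ := 1 - erf x

open MeasureTheory Filter Topology Set

lemma erf_hasDerivAt (x : ℝ) : HasDerivAt erf (2 / √π * exp (-x ^ 2)) x :=
  ((Continuous.integral_hasStrictDerivAt (by fun_prop) 0 x).hasDerivAt).const_mul _

lemma tendsto_erf_atTop : Tendsto erf atTop (𝓝 1) := by
  have hint : IntegrableOn (fun t : ℝ => exp (-t ^ 2)) (Ioi 0) := by
    simpa using (integrable_exp_neg_mul_sq one_pos).integrableOn
  have hlim := (intervalIntegral_tendsto_integral_Ioi 0 hint tendsto_id).const_mul (2 / √π)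
  have hval : 2 / √π * ∫ t in Ioi (0 : ℝ), exp (-t ^ 2) = 1 := by
    have hπ : √π ≠ 0 := by positivity
    have hgauss := integral_gaussian_Ioi 1
    simp only [neg_mul, one_mul, div_one] at hgauss
    rw [hgauss]
    field_simp
  rw [hval] at hlim
  exact hlim

lemma tendsto_erfc_atTop : Tendsto erfc atTop (𝓝 0) := by
  show Tendsto (fun x => 1 - erf x) atTop (𝓝 0)
  simpa using tendsto_erf_atTop.const_sub 1

lemma one_le_erfc_of_nonpos {x : ℝ} (hx : x ≤ 0) : 1 ≤ erfc x := by
  have hint : 0 ≤ ∫ t in x..0, exp (-t ^ 2) :=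
    intervalIntegral.integral_nonneg hx fun t _ => (exp_pos _).le
  have herf : erf x ≤ 0 := by
    rw [erf, intervalIntegral.integral_symm]
    exact mul_nonpos_of_nonneg_of_nonpos (by positivity) (neg_nonpos.2 hint)
  unfold erfc
  linarith

lemma hasDerivAt_mul_exp_neg_sq_sub_erfc (k x : ℝ) :
    HasDerivAt (fun x => k * exp (-x ^ 2) - erfc x) ((2 / √π - 2 * k * x) * exp (-x ^ 2)) x := by
  have hexp : HasDerivAt (fun x : ℝ => exp (-x ^ 2)) (exp (-x ^ 2) * -(2 * x)) x := by
    simpa using ((hasDerivAt_pow 2 x).neg).exp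
  exact ((hexp.const_mul k).sub ((erf_hasDerivAt x).const_sub 1)).congr_deriv (by ring)

lemma erfc_lt_mul_exp_neg_sq_of_le {k x₀ x : ℝ} (hk : 0 < k) (hx : x₀ ≤ x)
    (h₀ : erfc x₀ < k * exp (-x₀ ^ 2)) : erfc x < k * exp (-x ^ 2) := by
  set G : ℝ → ℝ := fun x => k * exp (-x ^ 2) - erfc x
  set c := 1 / (k * √π)
  have hG' : ∀ y, HasDerivAt G (2 * k * (c - y) * exp (-y ^ 2)) y := fun y =>
    (hasDerivAt_mul_exp_neg_sq_sub_erfc k y).congr_deriv (by simp only [c]; field_simp)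
  have hGcont : Continuous G := continuous_iff_continuousAt.2 fun y => (hG' y).continuousAt
  have hanti : StrictAntiOn G (Ici c) := by
    refine strictAntiOn_of_deriv_neg (convex_Ici c) hGcont.continuousOn fun y hy => ?_
    rw [interior_Ici, mem_Ioi] at hy
    rw [(hG' y).deriv]
    exact mul_neg_of_neg_of_pos (mul_neg_of_pos_of_neg (by positivity) (by linarith)) (exp_pos _)
  have hmono : MonotoneOn G (Iic c) := by
    refine monotoneOn_of_deriv_nonneg (convex_Iic c) hGcont.continuousOn
      (fun y _ => (hG' y).differentiableAt.differentiableWithinAt) fun y hy => ?_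
    rw [interior_Iic, mem_Iio] at hy
    rw [(hG' y).deriv]
    exact mul_nonneg (mul_nonneg (by positivity) (by linarith)) (exp_pos _).le
  have hlim : Tendsto G atTop (𝓝 0) := by
    have hexp : Tendsto (fun x : ℝ => exp (-x ^ 2)) atTop (𝓝 0) :=
      tendsto_exp_atBot.comp (tendsto_neg_atBot_iff.2 (tendsto_pow_atTop two_ne_zero))
    simpa using (hexp.const_mul k).sub tendsto_erfc_atTop
  suffices 0 < G x by simpa [G] using this
  rcases le_or_gt x c with hxc | hcx
  · exact (sub_pos.2 h₀).trans_le (hmono (hx.trans hxc) hxc hx)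
  · have hnonneg : 0 ≤ G (x + 1) := le_of_tendsto hlim <| by
      filter_upwards [eventually_ge_atTop (x + 1)] with w hw
      exact hanti.antitoneOn (by simp only [mem_Ici]; linarith) (by simp only [mem_Ici]; linarith) hw
    exact hnonneg.trans_lt (hanti hcx.le (by simp only [mem_Ici]; linarith) (by linarith))

lemma erfc_one_tenth_lt : erfc 0.1 < 0.9 * exp (-0.1 ^ 2) := by
  have hint : 0.1 * exp (-0.1 ^ 2) ≤ ∫ t in (0 : ℝ)..0.1, exp (-t ^ 2) := by
    simpa using intervalIntegral.integral_mono_on (μ := volume) (by norm_num)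
      (intervalIntegrable_const (c := exp (-0.1 ^ 2 : ℝ)))
      ((by fun_prop : Continuous fun t : ℝ => exp (-t ^ 2)).intervalIntegrable 0 0.1)
      fun t ht => exp_le_exp.2 (by nlinarith [ht.1, ht.2])
  have hexp : (0.99 : ℝ) ≤ exp (-0.1 ^ 2) := by nlinarith [add_one_le_exp (-0.1 ^ 2 : ℝ)]
  have hsqrtπ : √π < 1.7725 := by
    rw [sqrt_lt' (by norm_num)]
    linarith [pi_lt_d6]
  have hcoef : (2 : ℝ) / 1.7725 ≤ 2 / √π :=
    div_le_div_of_nonneg_left (by norm_num) (by positivity) hsqrtπ.le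
  have herf : 2 / √π * (0.1 * exp (-0.1 ^ 2)) ≤ erf 0.1 :=
    mul_le_mul_of_nonneg_left hint (by positivity)
  unfold erfc
  nlinarith

lemma pos_of_erfc_sub_exp_mul_erfc_eq {ε δ a : ℝ} (hε : 0.01 ≤ ε) (hδ : δ ≤ 0.05)
    (ha : erfc a - exp ε * erfc √(a ^ 2 + ε) = 2 * δ) : 0 < a := by
  by_contra! hna
  set u := √(a ^ 2 + ε)
  have hu : 0.1 ≤ u := le_sqrt_of_sq_le (by nlinarith)
  have htail : erfc u < 0.9 * exp (-u ^ 2) :=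
    erfc_lt_mul_exp_neg_sq_of_le (by norm_num) hu erfc_one_tenth_lt
  have hexp : exp ε * exp (-u ^ 2) = exp (-a ^ 2) := by
    rw [← exp_add, sq_sqrt (by positivity)]
    ring_nf
  have hexp_le : exp (-a ^ 2) ≤ 1 := exp_le_one_iff.2 (by nlinarith)
  nlinarith [one_le_erfc_of_nonpos hna, mul_lt_mul_of_pos_left htail (exp_pos ε)]

lemma div_sqrt_two_mul_lt_mul_div {ε Δ s : ℝ} (hε : 0 < ε) (hΔ : 0 < Δ) (hs : √ε < s) :
    Δ / √(2 * ε) < s * Δ / (ε * √2) := by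
  rw [sqrt_mul zero_le_two, div_lt_div_iff₀ (by positivity) (by positivity)]
  calc Δ * (ε * √2) = Δ * √2 * √ε * √ε := by rw [mul_assoc _ √ε, mul_self_sqrt hε.le]; ring
    _ < Δ * √2 * √ε * s := mul_lt_mul_of_pos_left hs (by positivity)
    _ = s * Δ * (√2 * √ε) := by ring

theorem sigma_DP_OPT_gt_general (ε δ Δ a : ℝ)
    (hε : 0.01 ≤ ε) (hδ1 : δ ≤ 0.05) (hΔ : 0 < Δ)
    (ha : erfc a - Real.exp ε * erfc (Real.sqrt (a ^ 2 + ε)) = 2 * δ) :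
    (a + Real.sqrt (a ^ 2 + ε)) * Δ / (ε * Real.sqrt 2) > Δ / Real.sqrt (2 * ε) := by
  have hε0 : 0 < ε := by linarith
  have ha0 : 0 < a := pos_of_erfc_sub_exp_mul_erfc_eq hε hδ1 ha
  have hsqrt : √ε ≤ √(a ^ 2 + ε) := sqrt_le_sqrt (by nlinarith)
  exact div_sqrt_two_mul_lt_mul_div hε0 hΔ (by linarith)

/-- If `ε ≥ 0.01`, `0 < δ ≤ 0.05`, `Δ > 0`, and `a` satisfies
`erfc a − e^ε · erfc (√(a² + ε)) = 2δ`, then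
`(a + √(a² + ε)) · Δ / (ε·√2) > Δ / √(2ε)`. -/
theorem sigma_DP_OPT_gt (ε δ Δ a : ℝ)
    (hε : 0.01 ≤ ε) (hδ0 : 0 < δ) (hδ1 : δ ≤ 0.05) (hΔ : 0 < Δ)
    (ha : erfc a - Real.exp ε * erfc (Real.sqrt (a ^ 2 + ε)) = 2 * δ) :
    (a + Real.sqrt (a ^ 2 + ε)) * Δ / (ε * Real.sqrt 2) > Δ / Real.sqrt (2 * ε) :=
  sigma_DP_OPT_gt_general ε δ Δ a hε hδ1 hΔ ha
end

section
/- Fix 0 < δ < 1 and let a : ℝ → ℝ be a function such that for every ε > 0, erfc(a(ε)) − e^ε · erfc(√(a(ε)² + ε)) = 2δ. Then (a(ε) + √(a(ε)² + ε))/√ε tends to 1 as ε → ∞. (Equivalently, given fixed δ, the optimal Gaussian noise amount σ_DP-OPT for (ε,δ)-differential privacy satisfies lim_{ε→∞} σ_DP-OPT / (Δ/√(2ε)) = 1, so σ_DP-OPT = Θ(1/√ε) as ε → ∞.) -/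
open Real

open MeasureTheory

lemma gauss_integrable : Integrable (fun t : ℝ => Real.exp (-t^2)) := by
  have := integrable_exp_neg_mul_sq (b := (1:ℝ)) one_pos
  simpa using this

lemma gauss_Ioi : ∫ t in Set.Ioi (0:ℝ), Real.exp (-t^2) = Real.sqrt Real.pi / 2 := by
  have := integral_gaussian_Ioi 1
  simpa using this

lemma gauss_shift (x : ℝ) :
    ∫ t in Set.Ioi x, Real.exp (-(t-x)^2) = ∫ s in Set.Ioi (0:ℝ), Real.exp (-s^2) := by
  have h := (measurePreserving_add_right (volume : Measure ℝ) x).setIntegral_preimage_emb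
    (MeasurableEquiv.addRight x).measurableEmbedding
    (fun t => Real.exp (-(t-x)^2)) (Set.Ioi x)
  have hpre : (fun s : ℝ => s + x) ⁻¹' Set.Ioi x = Set.Ioi 0 := by
    ext s; simp
  rw [hpre] at h
  rw [← h]
  simp


lemma erf_neg (x : ℝ) : erf (-x) = - erf x := by
  unfold erf
  have h := intervalIntegral.integral_comp_neg (a := (0:ℝ)) (b := x)
    (fun t => Real.exp (-t^2))
  simp only [neg_sq, neg_zero] at h
  -- h : ∫ t in 0..x, exp (-t^2) = ∫ t in -x..0, exp (-t^2)
  rw [intervalIntegral.integral_symm, ← h, mul_neg]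

lemma erfc_neg (x : ℝ) : erfc (-x) = 2 - erfc x := by
  unfold erfc; rw [erf_neg]; ring

lemma erfc_eq (x : ℝ) (hx : 0 ≤ x) :
    erfc x = 2 / Real.sqrt Real.pi * ∫ t in Set.Ioi x, Real.exp (-t^2) := by
  have hπ : Real.sqrt Real.pi ≠ 0 := by positivity
  have hsplit : (∫ t in Set.Ioi (0:ℝ), Real.exp (-t^2))
      = (∫ t in (0:ℝ)..x, Real.exp (-t^2)) + ∫ t in Set.Ioi x, Real.exp (-t^2) := by
    rw [intervalIntegral.integral_of_le hx, ← MeasureTheory.setIntegral_union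
      (Set.Ioc_disjoint_Ioi le_rfl) measurableSet_Ioi
      gauss_integrable.integrableOn gauss_integrable.integrableOn,
      Set.Ioc_union_Ioi_eq_Ioi hx]
  have h2 : (∫ t in (0:ℝ)..x, Real.exp (-t^2))
      = Real.sqrt Real.pi / 2 - ∫ t in Set.Ioi x, Real.exp (-t^2) := by
    rw [← gauss_Ioi, hsplit]; ring
  unfold erfc erf
  rw [h2]
  field_simp
  ring

lemma erfc_nonneg_of_nonneg (x : ℝ) (hx : 0 ≤ x) : 0 ≤ erfc x := by
  rw [erfc_eq x hx]
  have : 0 ≤ ∫ t in Set.Ioi x, Real.exp (-t^2) :=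
    setIntegral_nonneg measurableSet_Ioi (fun t _ => (Real.exp_pos _).le)
  positivity

lemma erfc_nonneg (x : ℝ) : 0 ≤ erfc x := by
  rcases le_or_gt 0 x with hx | hx
  · exact erfc_nonneg_of_nonneg x hx
  · have h1 : erfc x = 2 - erfc (-x) := by
      have := erfc_neg (-x); rw [neg_neg] at this; linarith
    have h2 : erfc (-x) ≤ 1 := by
      unfold erfc erf
      have : 0 ≤ ∫ t in (0:ℝ)..(-x), Real.exp (-t^2) :=
        intervalIntegral.integral_nonneg (by linarith) (fun t _ => (Real.exp_pos _).le)
      have hπ : 0 < Real.sqrt Real.pi := by positivity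
      have h3 : 0 ≤ 2 / Real.sqrt Real.pi * ∫ t in (0:ℝ)..(-x), Real.exp (-t^2) :=
        mul_nonneg (by positivity) this
      linarith
    linarith

lemma erfc_le_exp (x : ℝ) (hx : 0 ≤ x) : erfc x ≤ Real.exp (-x^2) := by
  rw [erfc_eq x hx]
  have hπ : 0 < Real.sqrt Real.pi := by positivity
  have key : (∫ t in Set.Ioi x, Real.exp (-t^2))
      ≤ Real.exp (-x^2) * (Real.sqrt Real.pi / 2) := by
    have h1 : (∫ t in Set.Ioi x, Real.exp (-t^2))
        ≤ ∫ t in Set.Ioi x, Real.exp (-x^2) * Real.exp (-(t-x)^2) := by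
      apply setIntegral_mono_on gauss_integrable.integrableOn
        (((gauss_integrable.comp_sub_right x).const_mul _).integrableOn)
        measurableSet_Ioi
      intro t ht
      rw [← Real.exp_add, Real.exp_le_exp]
      have : x ≤ t := le_of_lt ht
      nlinarith
    have h2 : (∫ t in Set.Ioi x, Real.exp (-x^2) * Real.exp (-(t-x)^2))
        = Real.exp (-x^2) * (Real.sqrt Real.pi / 2) := by
      rw [MeasureTheory.integral_const_mul, gauss_shift, gauss_Ioi]
    linarith
  calc 2 / Real.sqrt Real.pi * ∫ t in Set.Ioi x, Real.exp (-t^2)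
      ≤ 2 / Real.sqrt Real.pi * (Real.exp (-x^2) * (Real.sqrt Real.pi / 2)) := by
        apply mul_le_mul_of_nonneg_left key; positivity
    _ = Real.exp (-x^2) := by field_simp

/-- Fix `0 < δ < 1`. If `a : ℝ → ℝ` satisfies, for all `ε > 0`,
`erfc (a ε) − e^ε · erfc (√((a ε)² + ε)) = 2δ`, then
`(a ε + √((a ε)² + ε))/√ε → 1` as `ε → ∞`. -/
theorem sigma_DP_OPT_asymptotics_large_eps (δ : ℝ) (hδ0 : 0 < δ) (hδ1 : δ < 1)
    (a : ℝ → ℝ)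
    (ha : ∀ ε : ℝ, 0 < ε →
      erfc (a ε) - Real.exp ε * erfc (Real.sqrt ((a ε) ^ 2 + ε)) = 2 * δ) :
    Filter.Tendsto (fun ε : ℝ => (a ε + Real.sqrt ((a ε) ^ 2 + ε)) / Real.sqrt ε)
      Filter.atTop (nhds 1) := by
  set K : ℝ := Real.sqrt (-Real.log (2*δ)) + Real.sqrt (-Real.log (1-δ)) with hKdef
  have hK0 : 0 ≤ K := by positivity
  -- boundedness of a
  have hbound : ∀ ε : ℝ, 0 < ε → |a ε| ≤ K := by
    intro ε hε
    have heq := ha ε hε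
    have hs0 : (0:ℝ) ≤ (a ε)^2 + ε := by positivity
    have hsq : Real.sqrt ((a ε)^2 + ε) ^ 2 = (a ε)^2 + ε := Real.sq_sqrt hs0
    have hb : Real.exp ε * erfc (Real.sqrt ((a ε)^2 + ε)) ≤ Real.exp (-(a ε)^2) := by
      have h1 := erfc_le_exp (Real.sqrt ((a ε)^2 + ε)) (Real.sqrt_nonneg _)
      rw [hsq] at h1
      calc Real.exp ε * erfc (Real.sqrt ((a ε)^2 + ε))
          ≤ Real.exp ε * Real.exp (-((a ε)^2 + ε)) :=
            mul_le_mul_of_nonneg_left h1 (Real.exp_pos _).le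
        _ = Real.exp (-(a ε)^2) := by rw [← Real.exp_add]; ring_nf
    have hterm : 0 ≤ Real.exp ε * erfc (Real.sqrt ((a ε)^2 + ε)) :=
      mul_nonneg (Real.exp_pos _).le (erfc_nonneg _)
    have hub : a ε ≤ K := by
      rcases le_or_gt (a ε) 0 with h | h
      · linarith
      · have h2δ : 2*δ ≤ erfc (a ε) := by linarith
        have h3 := erfc_le_exp (a ε) h.le
        have hlog : Real.log (2*δ) ≤ -(a ε)^2 := by
          have := Real.log_le_log (by positivity) (le_trans h2δ h3)
          rwa [Real.log_exp] at this
        have h4 : a ε ≤ Real.sqrt (-Real.log (2*δ)) := by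
          calc a ε = Real.sqrt ((a ε)^2) := (Real.sqrt_sq h.le).symm
            _ ≤ _ := Real.sqrt_le_sqrt (by linarith)
        have := Real.sqrt_nonneg (-Real.log (1-δ))
        linarith
    have hlb : -K ≤ a ε := by
      rcases le_or_gt 0 (a ε) with h | h
      · linarith
      · set x : ℝ := -(a ε) with hxdef
        have hx0 : 0 < x := by simp [hxdef]; linarith
        have hneg : erfc (a ε) = 2 - erfc x := by
          rw [show a ε = -x by simp [hxdef], erfc_neg]
        have e1 := erfc_le_exp x hx0.le
        have hxx : (a ε)^2 = x^2 := by rw [hxdef]; ring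
        have h3 : 1 - δ ≤ Real.exp (-x^2) := by
          rw [hxx] at hb heq; linarith
        have hlog : Real.log (1-δ) ≤ -x^2 := by
          have := Real.log_le_log (by linarith) h3
          rwa [Real.log_exp] at this
        have h4 : x ≤ Real.sqrt (-Real.log (1-δ)) := by
          calc x = Real.sqrt (x^2) := (Real.sqrt_sq hx0.le).symm
            _ ≤ _ := Real.sqrt_le_sqrt (by linarith)
        have := Real.sqrt_nonneg (-Real.log (2*δ))
        have : a ε = -x := by simp [hxdef]
        linarith
    exact abs_le.mpr ⟨hlb, hub⟩
  -- squeeze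
  have hzero : Filter.Tendsto (fun ε : ℝ => K / Real.sqrt ε) Filter.atTop (nhds 0) := by
    have h1 : Filter.Tendsto (fun ε : ℝ => Real.sqrt ε) Filter.atTop Filter.atTop := by
      apply Filter.tendsto_atTop_atTop.mpr
      intro b
      refine ⟨(max b 0)^2, fun ε hε => le_trans (le_max_left b 0) ?_⟩
      rw [← Real.sqrt_sq (le_max_right b 0)]
      exact Real.sqrt_le_sqrt hε
    have h2 := h1.inv_tendsto_atTop
    have := h2.const_mul K
    simpa [div_eq_mul_inv, mul_zero] using this
  have hlo : Filter.Tendsto (fun ε : ℝ => 1 - K / Real.sqrt ε) Filter.atTop (nhds 1) := by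
    have := hzero.const_sub 1
    simpa using this
  have hhi : Filter.Tendsto (fun ε : ℝ => 1 + 2 * (K / Real.sqrt ε)) Filter.atTop (nhds 1) := by
    have := (hzero.const_mul 2).const_add 1
    simpa using this
  refine tendsto_of_tendsto_of_tendsto_of_le_of_le' hlo hhi ?_ ?_
  · filter_upwards [Filter.eventually_gt_atTop 0] with ε hε
    have hs : 0 < Real.sqrt ε := Real.sqrt_pos.mpr hε
    have hab := abs_le.mp (hbound ε hε)
    have h1 : Real.sqrt ε ≤ Real.sqrt ((a ε)^2 + ε) :=
      Real.sqrt_le_sqrt (by nlinarith)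
    have h2 : Real.sqrt ε - K ≤ a ε + Real.sqrt ((a ε)^2 + ε) := by linarith [hab.1]
    have h3 : (Real.sqrt ε - K) / Real.sqrt ε ≤ (a ε + Real.sqrt ((a ε)^2 + ε)) / Real.sqrt ε :=
      div_le_div_of_nonneg_right h2 hs.le
    have h4 : (Real.sqrt ε - K) / Real.sqrt ε = 1 - K / Real.sqrt ε := by
      field_simp
    linarith
  · filter_upwards [Filter.eventually_gt_atTop 0] with ε hε
    have hs : 0 < Real.sqrt ε := Real.sqrt_pos.mpr hε
    have hab := abs_le.mp (hbound ε hε)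
    have hsq : Real.sqrt ε ^ 2 = ε := Real.sq_sqrt hε.le
    have h1 : Real.sqrt ((a ε)^2 + ε) ≤ K + Real.sqrt ε := by
      rw [← Real.sqrt_sq (by positivity : (0:ℝ) ≤ K + Real.sqrt ε)]
      apply Real.sqrt_le_sqrt
      have haK : (a ε)^2 ≤ K^2 := sq_le_sq' hab.1 hab.2
      nlinarith [Real.sqrt_nonneg ε]
    have h2 : a ε + Real.sqrt ((a ε)^2 + ε) ≤ 2*K + Real.sqrt ε := by linarith [hab.2]
    have h3 : (a ε + Real.sqrt ((a ε)^2 + ε)) / Real.sqrt ε ≤ (2*K + Real.sqrt ε) / Real.sqrt ε :=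
      div_le_div_of_nonneg_right h2 hs.le
    have h4 : (2*K + Real.sqrt ε) / Real.sqrt ε = 1 + 2 * (K / Real.sqrt ε) := by
      field_simp; ring
    linarith
end

section
/- Fix ε > 0 and let a : ℝ → ℝ be a function such that for every δ ∈ (0,1), erfc(a(δ)) − e^ε · erfc(√(a(δ)² + ε)) = 2δ. Then (a(δ) + √(a(δ)² + ε)) / (2·√(ln(1/δ))) tends to 1 as δ → 0 from the right. (Equivalently, given fixed ε, the optimal Gaussian noise amount σ_DP-OPT for (ε,δ)-differential privacy satisfies lim_{δ→0} σ_DP-OPT / ((Δ/ε)·√(2 ln(1/δ))) = 1, so σ_DP-OPT = Θ(√(ln(1/δ))) as δ → 0.) -/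
/-!
Write `G x = ∫ₓ^∞ e^{-t²} dt`, so that `erfc = (2/√π) G` and `a(δ)` solves `F (a δ) = √π δ` for
`F x = G x - e^ε G (√(x² + ε))`. Since `F' x = -e^{-x²} (1 - x / √(x² + ε)) < 0` and `F → 0`,
`F` is positive and `a(δ) → ∞` as `δ → 0⁺`. The bound `G x < e^{-x²}` (for `x > 1/2`) and the
mean value theorem for `F` on `[x, x + 1]` squeeze `log F x` between `C - (x + 2)²` and `-x²`,
so `log F x / x² → -1`, i.e. `ln(1/δ) / a(δ)² → 1`; finally `√(a² + ε) / a → 1`.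
-/

open Real

open Set Filter Topology MeasureTheory

noncomputable def gaussianTail (x : ℝ) : ℝ := ∫ t in Ioi x, exp (-t ^ 2)

lemma integrable_exp_neg_sq : Integrable fun t : ℝ => exp (-t ^ 2) := by
  simpa using integrable_exp_neg_mul_sq one_pos

lemma intervalIntegral_add_gaussianTail (x : ℝ) :
    (∫ t in (0 : ℝ)..x, exp (-t ^ 2)) + gaussianTail x = √π / 2 := by
  rw [gaussianTail, intervalIntegral.integral_interval_add_Ioi integrable_exp_neg_sq.integrableOn
    integrable_exp_neg_sq.integrableOn]
  simpa using integral_gaussian_Ioi 1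

lemma erfc_eq_gaussianTail (x : ℝ) : erfc x = 2 / √π * gaussianTail x := by
  have := intervalIntegral_add_gaussianTail x
  rw [erfc, erf]
  field_simp
  linarith

lemma gaussianTail_nonneg (x : ℝ) : 0 ≤ gaussianTail x :=
  setIntegral_nonneg measurableSet_Ioi fun _ _ => (exp_pos _).le

lemma hasDerivAt_gaussianTail (x : ℝ) : HasDerivAt gaussianTail (-exp (-x ^ 2)) x := by
  have h : gaussianTail = fun y => √π / 2 - ∫ t in (0 : ℝ)..y, exp (-t ^ 2) :=
    funext fun y => eq_sub_of_add_eq' (intervalIntegral_add_gaussianTail y)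
  rw [h]
  exact ((by fun_prop : Continuous fun t : ℝ => exp (-t ^ 2)).integral_hasStrictDerivAt 0 x
    |>.hasDerivAt).const_sub _

lemma tendsto_gaussianTail_atTop : Tendsto gaussianTail atTop (𝓝 0) :=
  tendsto_integral_Ioi_zero tendsto_id

lemma hasDerivAt_exp_neg_sq (x : ℝ) :
    HasDerivAt (fun y => exp (-y ^ 2)) (-(2 * x * exp (-x ^ 2))) x := by
  have := ((hasDerivAt_pow 2 x).fun_neg).exp
  convert this using 1
  push_cast
  ring

lemma tendsto_exp_neg_sq_atTop : Tendsto (fun x : ℝ => exp (-x ^ 2)) atTop (𝓝 0) :=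
  tendsto_exp_atBot.comp (tendsto_neg_atTop_atBot.comp (tendsto_pow_atTop two_ne_zero))

lemma StrictAntiOn.lt_of_tendsto_atTop {α β : Type*} [LinearOrder α] [NoMaxOrder α]
    [LinearOrder β] [TopologicalSpace β] [OrderClosedTopology β] {f : α → β} {c : α} {b : β}
    (hf : StrictAntiOn f (Ioi c)) (hb : Tendsto f atTop (𝓝 b)) {x : α} (hx : c < x) :
    b < f x := by
  have : Nonempty α := ⟨x⟩
  obtain ⟨y, hxy⟩ := exists_gt x
  have hb_le : b ≤ f y := le_of_tendsto hb <| (eventually_gt_atTop y).mono fun z hz =>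
    (hf (hx.trans hxy) (hx.trans (hxy.trans hz)) hz).le
  exact hb_le.trans_lt (hf hx (hx.trans hxy) hxy)

lemma gaussianTail_lt_exp_neg_sq {x : ℝ} (hx : 1 / 2 < x) : gaussianTail x < exp (-x ^ 2) := by
  have hanti : StrictAntiOn (fun y => exp (-y ^ 2) - gaussianTail y) (Ioi (1 / 2)) := by
    refine strictAntiOn_of_hasDerivWithinAt_neg (convex_Ioi _)
      (fun y _ => ((hasDerivAt_exp_neg_sq y).sub (hasDerivAt_gaussianTail y)).continuousAt
        |>.continuousWithinAt)
      (fun y _ => ((hasDerivAt_exp_neg_sq y).sub (hasDerivAt_gaussianTail y)).hasDerivWithinAt)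
      fun y hy => ?_
    rw [interior_Ioi, mem_Ioi] at hy
    nlinarith [exp_pos (-y ^ 2)]
  have := hanti.lt_of_tendsto_atTop
    (by simpa using tendsto_exp_neg_sq_atTop.sub tendsto_gaussianTail_atTop) hx
  linarith

lemma lt_sqrt_sq_add {ε : ℝ} (hε : 0 < ε) (x : ℝ) : x < √(x ^ 2 + ε) := by
  rcases lt_or_ge x 0 with hx | hx
  · exact hx.trans_le (sqrt_nonneg _)
  · exact (lt_sqrt hx).2 (by linarith)

lemma div_le_one_sub_div_sqrt_sq_add {ε t m : ℝ} (hε : 0 < ε) (ht : 0 ≤ t) (htm : t ≤ m) :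
    ε / (2 * (m + √ε) ^ 2) ≤ 1 - t / √(t ^ 2 + ε) := by
  set s := √(t ^ 2 + ε) with hs_def
  have hs : s ^ 2 = t ^ 2 + ε := sq_sqrt (by positivity)
  have hs_pos : 0 < s := sqrt_pos.2 (by positivity)
  have hs_le : s ≤ m + √ε := by
    nlinarith [sq_sqrt hε.le, sqrt_nonneg ε]
  have hgap : 1 - t / s = ε / (s * (s + t)) := by
    field_simp
    nlinarith
  rw [hgap]
  refine div_le_div_of_nonneg_left hε.le (by positivity) ?_
  calc s * (s + t) ≤ (m + √ε) * (2 * (m + √ε)) :=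
        mul_le_mul hs_le (by linarith [sqrt_nonneg ε]) (by positivity) (by linarith)
    _ = 2 * (m + √ε) ^ 2 := by ring

/-- `√π · δ` as a function of `a`, since `erfc = (2 / √π) · gaussianTail`. -/
noncomputable def privacyDelta (ε x : ℝ) : ℝ := gaussianTail x - exp ε * gaussianTail √(x ^ 2 + ε)

lemma erfc_sub_exp_mul_erfc (ε x : ℝ) :
    erfc x - exp ε * erfc √(x ^ 2 + ε) = 2 / √π * privacyDelta ε x := by
  rw [privacyDelta, erfc_eq_gaussianTail, erfc_eq_gaussianTail]
  ring

lemma privacyDelta_le_gaussianTail (ε x : ℝ) : privacyDelta ε x ≤ gaussianTail x :=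
  sub_le_self _ (mul_nonneg (exp_pos ε).le (gaussianTail_nonneg _))

lemma hasDerivAt_privacyDelta {ε : ℝ} (hε : 0 < ε) (x : ℝ) :
    HasDerivAt (privacyDelta ε) (-(exp (-x ^ 2) * (1 - x / √(x ^ 2 + ε)))) x := by
  have hpos : 0 < x ^ 2 + ε := by positivity
  have hsqrt : HasDerivAt (fun y => √(y ^ 2 + ε)) (x / √(x ^ 2 + ε)) x := by
    convert ((hasDerivAt_pow 2 x).add_const ε).sqrt hpos.ne' using 1
    field_simp
    push_cast
    ring
  have hexp : exp ε * exp (-√(x ^ 2 + ε) ^ 2) = exp (-x ^ 2) := by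
    rw [← exp_add, sq_sqrt hpos.le]
    ring_nf
  refine ((hasDerivAt_gaussianTail x).sub
    (((hasDerivAt_gaussianTail _).comp x hsqrt).const_mul (exp ε))).congr_deriv ?_
  rw [← hexp]
  ring

lemma privacyDelta_strictAnti {ε : ℝ} (hε : 0 < ε) : StrictAnti (privacyDelta ε) :=
  strictAnti_of_hasDerivAt_neg (hasDerivAt_privacyDelta hε) fun x =>
    neg_neg_of_pos <| mul_pos (exp_pos _) <| sub_pos.2 <|
      (div_lt_one (sqrt_pos.2 (by positivity))).2 (lt_sqrt_sq_add hε x)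

lemma tendsto_privacyDelta_atTop {ε : ℝ} (hε : 0 < ε) :
    Tendsto (privacyDelta ε) atTop (𝓝 0) := by
  have hsqrt : Tendsto (fun x => √(x ^ 2 + ε)) atTop atTop :=
    tendsto_atTop_mono (fun x => (lt_sqrt_sq_add hε x).le) tendsto_id
  have := tendsto_gaussianTail_atTop.sub ((tendsto_gaussianTail_atTop.comp hsqrt).const_mul (exp ε))
  rwa [mul_zero, sub_zero] at this

lemma privacyDelta_pos {ε : ℝ} (hε : 0 < ε) (x : ℝ) : 0 < privacyDelta ε x :=
  ((privacyDelta_strictAnti hε).strictAntiOn (Ioi (x - 1))).lt_of_tendsto_atTop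
    (tendsto_privacyDelta_atTop hε) (sub_one_lt x)

lemma exp_mul_le_privacyDelta {ε x : ℝ} (hε : 0 < ε) (hx : 0 ≤ x) :
    exp (-(x + 1) ^ 2) * (ε / (2 * (x + 1 + √ε) ^ 2)) ≤ privacyDelta ε x := by
  obtain ⟨ξ, ⟨hxξ, hξx⟩, hslope⟩ := exists_hasDerivAt_eq_slope (privacyDelta ε) _ (lt_add_one x)
    (fun y _ => (hasDerivAt_privacyDelta hε y).continuousAt.continuousWithinAt)
    (fun y _ => hasDerivAt_privacyDelta hε y)
  rw [add_sub_cancel_left, div_one] at hslope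
  have hexp : exp (-(x + 1) ^ 2) ≤ exp (-ξ ^ 2) := exp_le_exp.2 (by nlinarith)
  have hgap := div_le_one_sub_div_sqrt_sq_add hε (hx.trans hxξ.le) hξx.le
  have hnext := privacyDelta_pos hε (x + 1)
  calc exp (-(x + 1) ^ 2) * (ε / (2 * (x + 1 + √ε) ^ 2))
      ≤ exp (-ξ ^ 2) * (1 - ξ / √(ξ ^ 2 + ε)) :=
        mul_le_mul hexp hgap (by positivity) (exp_pos _).le
    _ ≤ privacyDelta ε x := by linarith

lemma log_privacyDelta_ge {ε x : ℝ} (hε : 0 < ε) (hx : 0 ≤ x) :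
    log (ε / 2) + 3 - 2 * √ε - (x + 2) ^ 2 ≤ log (privacyDelta ε x) := by
  have hm : 0 < x + 1 + √ε := by positivity
  have hfactor : 0 < ε / (2 * (x + 1 + √ε) ^ 2) := by positivity
  have := log_le_log (mul_pos (exp_pos _) hfactor) (exp_mul_le_privacyDelta hε hx)
  rw [log_mul (exp_pos _).ne' hfactor.ne', log_exp, log_div hε.ne' (by positivity),
    log_mul two_ne_zero (by positivity), log_pow] at this
  rw [log_div hε.ne' two_ne_zero]
  push_cast at this
  nlinarith [log_le_sub_one_of_pos hm]

lemma log_privacyDelta_lt {ε x : ℝ} (hε : 0 < ε) (hx : 1 / 2 < x) :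
    log (privacyDelta ε x) < -x ^ 2 := by
  rw [← log_exp (-x ^ 2)]
  exact log_lt_log (privacyDelta_pos hε x)
    ((privacyDelta_le_gaussianTail ε x).trans_lt (gaussianTail_lt_exp_neg_sq hx))

lemma tendsto_log_privacyDelta_div_sq {ε : ℝ} (hε : 0 < ε) :
    Tendsto (fun x => log (privacyDelta ε x) / x ^ 2) atTop (𝓝 (-1)) := by
  set C := log (ε / 2) + 3 - 2 * √ε
  have hlower : Tendsto (fun x : ℝ => (C - (x + 2) ^ 2) / x ^ 2) atTop (𝓝 (-1)) := by
    have h := tendsto_inv_atTop_zero (𝕜 := ℝ)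
    have := (h.pow 2).const_mul C |>.sub ((h.const_mul 2).const_add 1 |>.pow 2)
    norm_num at this
    refine this.congr' ?_
    filter_upwards [eventually_ne_atTop 0] with x hx
    field_simp
  refine tendsto_of_tendsto_of_tendsto_of_le_of_le' hlower tendsto_const_nhds ?_ ?_
  · filter_upwards [eventually_ge_atTop 0] with x hx
    exact div_le_div_of_nonneg_right (log_privacyDelta_ge hε hx) (sq_nonneg x)
  · filter_upwards [eventually_gt_atTop (1 / 2)] with x hx
    rw [div_le_iff₀ (by positivity)]
    linarith [log_privacyDelta_lt hε hx]

lemma tendsto_atTop_of_tendsto_privacyDelta_zero {α : Type*} {l : Filter α} {ε : ℝ} (hε : 0 < ε)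
    {b : α → ℝ} (h : Tendsto (fun t => privacyDelta ε (b t)) l (𝓝 0)) : Tendsto b l atTop :=
  tendsto_atTop.2 fun M => (h.eventually (gt_mem_nhds (privacyDelta_pos hε M))).mono fun _ ht =>
    ((privacyDelta_strictAnti hε).lt_iff_gt.1 ht).le

lemma tendsto_add_sqrt_sq_add_div_sqrt {α : Type*} {l : Filter α} {x L : α → ℝ} (ε : ℝ)
    (hx : Tendsto x l atTop) (hL : Tendsto (fun t => L t / x t ^ 2) l (𝓝 1)) :
    Tendsto (fun t => (x t + √(x t ^ 2 + ε)) / (2 * √(L t))) l (𝓝 1) := by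
  have hε_div : Tendsto (fun t => ε / x t ^ 2) l (𝓝 0) :=
    tendsto_const_nhds.div_atTop ((tendsto_pow_atTop two_ne_zero).comp hx)
  have key := (tendsto_const_nhds (x := (1 : ℝ))).add (hε_div.const_add 1).sqrt
    |>.div ((tendsto_const_nhds (x := (2 : ℝ))).mul hL.sqrt) (by norm_num)
  norm_num at key
  refine key.congr' ?_
  filter_upwards [hx.eventually_gt_atTop 0] with t ht
  have hsplit : x t ^ 2 + ε = x t ^ 2 * (1 + ε / x t ^ 2) := by field_simp
  rw [Pi.div_apply, sqrt_div' _ (sq_nonneg _), sqrt_sq ht.le, hsplit, sqrt_mul (sq_nonneg _),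
    sqrt_sq ht.le]
  field_simp

/-- Fix `ε > 0`. If `a : ℝ → ℝ` satisfies, for all `δ ∈ (0,1)`,
`erfc (a δ) − e^ε · erfc (√((a δ)² + ε)) = 2δ`, then
`(a δ + √((a δ)² + ε)) / (2·√(ln(1/δ))) → 1` as `δ → 0⁺`. -/
theorem sigma_DP_OPT_asymptotics_small_delta (ε : ℝ) (hε : 0 < ε)
    (a : ℝ → ℝ)
    (ha : ∀ δ : ℝ, 0 < δ → δ < 1 →
      erfc (a δ) - Real.exp ε * erfc (Real.sqrt ((a δ) ^ 2 + ε)) = 2 * δ) :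
    Filter.Tendsto
      (fun δ : ℝ => (a δ + Real.sqrt ((a δ) ^ 2 + ε)) / (2 * Real.sqrt (Real.log (1 / δ))))
      (nhdsWithin 0 (Set.Ioi 0)) (nhds 1) := by
  have hδ : ∀ᶠ δ in 𝓝[>] (0 : ℝ), 0 < δ ∧ privacyDelta ε (a δ) = √π * δ := by
    filter_upwards [Ioo_mem_nhdsGT one_pos] with δ ⟨hδ0, hδ1⟩
    have := ha δ hδ0 hδ1
    rw [erfc_sub_exp_mul_erfc] at this
    refine ⟨hδ0, ?_⟩
    field_simp at this
    linarith
  have hδ_lim : Tendsto (fun δ : ℝ => √π * δ) (𝓝[>] 0) (𝓝 0) := by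
    simpa using (tendsto_nhdsWithin_of_tendsto_nhds (tendsto_id (x := 𝓝 (0 : ℝ)))).const_mul √π
  have ha_top : Tendsto a (𝓝[>] 0) atTop := tendsto_atTop_of_tendsto_privacyDelta_zero hε <|
    hδ_lim.congr' (hδ.mono fun _ h => h.2.symm)
  refine tendsto_add_sqrt_sq_add_div_sqrt ε ha_top ?_
  have hL := (tendsto_const_nhds (x := log √π)).div_atTop
    ((tendsto_pow_atTop two_ne_zero).comp ha_top) |>.sub
    ((tendsto_log_privacyDelta_div_sq hε).comp ha_top)
  rw [zero_sub, neg_neg] at hL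
  -- `log (1 / δ) = log √π - log (privacyDelta ε (a δ))`
  refine hL.congr' ?_
  filter_upwards [hδ] with δ ⟨hδ0, hF⟩
  simp only [Function.comp_apply, hF]
  rw [log_mul (by positivity) hδ0.ne', one_div, log_inv]
  ring
end

section
/- For every x > 0, erfc(x) < (1/2)·exp(−2x²) + (1/2)·exp(−x²). -/
open Real

/-!
With `ψ = erfcGapFactor`, the gap `g x = e^{-2x²}/2 + e^{-x²}/2 - erfc x` equals
`∫_x^∞ e^{-t²} ψ t dt`, and `g 0 = 0`. Since `ψ' = 1 + (2 - 4t²) e^{-t²} > 0`, the integrand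
changes sign exactly once, from negative to positive. So `g x > 0`: directly if `ψ > 0` on `(x, ∞)`, and
otherwise because `g x = -∫_0^x e^{-t²} ψ t dt` with a negative integrand.
-/

open MeasureTheory Set Filter

lemma setIntegral_Ioi_pos_of_pos {f : ℝ → ℝ} {x : ℝ} (hf : IntegrableOn f (Ioi x))
    (hpos : ∀ t ∈ Ioi x, 0 < f t) : 0 < ∫ t in Ioi x, f t := by
  have hnonneg : 0 ≤ᵐ[volume.restrict (Ioi x)] f :=
    (ae_restrict_iff' measurableSet_Ioi).2 (ae_of_all _ fun t ht => (hpos t ht).le)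
  have hsupp : Function.support f ∩ Ioi x = Ioi x :=
    inter_eq_right.2 fun t ht => (hpos t ht).ne'
  rw [setIntegral_pos_iff_support_of_nonneg_ae hnonneg hf, hsupp, volume_Ioi]
  exact ENNReal.zero_lt_top

theorem integral_Ioi_pos_of_sign_change {f : ℝ → ℝ} {a c x : ℝ} (hf : IntegrableOn f (Ioi a))
    (h_zero : ∫ t in Ioi a, f t = 0) (hneg : ∀ t ∈ Ioo a c, f t < 0)
    (hpos : ∀ t ∈ Ioi c, 0 < f t) (hx : a < x) : 0 < ∫ t in Ioi x, f t := by
  rcases lt_or_ge x c with hxc | hcx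
  · have hint : IntervalIntegrable (fun t => -f t) volume a x :=
      (intervalIntegrable_iff_integrableOn_Ioc_of_le hx.le).2 (hf.mono_set Ioc_subset_Ioi_self).neg
    have hint_pos := intervalIntegral.intervalIntegral_pos_of_pos_on hint
      (fun t ht => neg_pos.2 (hneg t ⟨ht.1, ht.2.trans hxc⟩)) hx
    rw [intervalIntegral.integral_neg, ← intervalIntegral.integral_Ioi_sub_Ioi hf hx.le,
      h_zero] at hint_pos
    linarith
  · exact setIntegral_Ioi_pos_of_pos (hf.mono_set (Ioi_subset_Ioi hx.le))
      fun t ht => hpos t (hcx.trans_lt ht)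

theorem four_mul_sub_two_lt_exp (s : ℝ) : 4 * s - 2 < exp s := by
  rcases lt_or_ge s 0 with hs | hs
  · linarith [exp_pos s]
  · have := sum_le_exp_of_nonneg hs 4
    norm_num [Finset.sum_range_succ, Nat.factorial] at this
    nlinarith [mul_nonneg hs (sq_nonneg (s - 2))]

theorem integral_Ioi_mul_exp_neg_mul_sq {b : ℝ} (hb : 0 < b) (x : ℝ) :
    ∫ t in Ioi x, t * exp (-b * t ^ 2) = exp (-b * x ^ 2) / (2 * b) := by
  have hderiv (t : ℝ) : HasDerivAt (fun u => -(2 * b)⁻¹ * exp (-b * u ^ 2))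
      (t * exp (-b * t ^ 2)) t := by
    refine (((hasDerivAt_pow 2 t).const_mul (-b)).exp.const_mul (-(2 * b)⁻¹)).congr_deriv ?_
    field_simp
    ring
  have hlim : Tendsto (fun u => -(2 * b)⁻¹ * exp (-b * u ^ 2)) atTop (nhds 0) := by
    have := (tendsto_pow_atTop (α := ℝ) two_ne_zero).const_mul_atTop_of_neg (neg_lt_zero.2 hb)
    simpa using (tendsto_exp_atBot.comp this).const_mul (-(2 * b)⁻¹)
  rw [integral_Ioi_of_hasDerivAt_of_tendsto' (fun t _ => hderiv t)
    (integrable_mul_exp_neg_mul_sq hb).integrableOn hlim]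
  field_simp
  ring

theorem erfc_eq_integral_Ioi (x : ℝ) : erfc x = 2 / √π * ∫ t in Ioi x, exp (-t ^ 2) := by
  have hint : Integrable fun t : ℝ => exp (-t ^ 2) := by
    simpa using integrable_exp_neg_mul_sq one_pos
  have hgauss : ∫ t in Ioi (0 : ℝ), exp (-t ^ 2) = √π / 2 := by
    simpa using integral_gaussian_Ioi 1
  rw [erfc, erf, ← intervalIntegral.integral_Ioi_sub_Ioi' hint.integrableOn hint.integrableOn,
    hgauss]
  field_simp
  ring

noncomputable def erfcGapFactor (t : ℝ) : ℝ := t - 2 / √π + 2 * t * exp (-t ^ 2)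

theorem hasDerivAt_erfcGapFactor (t : ℝ) :
    HasDerivAt erfcGapFactor (1 + (2 - 4 * t ^ 2) * exp (-t ^ 2)) t := by
  have hexp : HasDerivAt (fun u : ℝ => exp (-u ^ 2)) (exp (-t ^ 2) * (-(2 * t))) t :=
    (hasDerivAt_pow 2 t).neg.exp.congr_deriv (by simp)
  exact (((hasDerivAt_id' t).sub_const (2 / √π)).add
    (((hasDerivAt_id' t).const_mul 2).mul hexp)).congr_deriv (by ring)

theorem erfcGapFactor_strictMono : StrictMono erfcGapFactor := by
  refine strictMono_of_hasDerivAt_pos hasDerivAt_erfcGapFactor fun t => ?_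
  have h := mul_lt_mul_of_pos_right (four_mul_sub_two_lt_exp (t ^ 2)) (exp_pos (-t ^ 2))
  rw [← exp_add, add_neg_cancel, exp_zero] at h
  linarith

theorem exists_erfcGapFactor_eq_zero : ∃ c, erfcGapFactor c = 0 := by
  have hsqrt : 1 < √π := by
    rw [lt_sqrt zero_le_one]; linarith [pi_gt_three]
  have h0 : erfcGapFactor 0 < 0 := by
    simpa [erfcGapFactor] using pi_pos
  have h2 : 0 < erfcGapFactor 2 := by
    have hquot : 2 / √π < 2 := (div_lt_iff₀ (by linarith)).2 (by linarith)
    have hexp : 0 < 2 * 2 * exp (-2 ^ 2) := by positivity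
    exact add_pos (sub_pos.2 hquot) hexp
  have hcont : Continuous erfcGapFactor := by unfold erfcGapFactor; fun_prop
  obtain ⟨c, -, hc⟩ := intermediate_value_Ioo zero_le_two hcont.continuousOn ⟨h0, h2⟩
  exact ⟨c, hc⟩

theorem exp_neg_sq_mul_erfcGapFactor (t : ℝ) :
    exp (-t ^ 2) * erfcGapFactor t =
      t * exp (-t ^ 2) + 2 * (t * exp (-2 * t ^ 2)) - 2 / √π * exp (-t ^ 2) := by
  have : exp (-2 * t ^ 2) = exp (-t ^ 2) * exp (-t ^ 2) := by rw [← exp_add]; ring_nf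
  rw [erfcGapFactor, this]
  ring

theorem integrable_exp_neg_sq_mul_erfcGapFactor :
    Integrable fun t => exp (-t ^ 2) * erfcGapFactor t := by
  simp_rw [exp_neg_sq_mul_erfcGapFactor]
  have h1 := integrable_mul_exp_neg_mul_sq one_pos
  have h3 := integrable_exp_neg_mul_sq one_pos
  simp only [neg_mul, one_mul] at h1 h3
  exact (h1.add ((integrable_mul_exp_neg_mul_sq two_pos).const_mul 2)).sub (h3.const_mul _)

theorem half_exp_add_half_exp_sub_erfc (x : ℝ) :
    1 / 2 * exp (-(2 * x ^ 2)) + 1 / 2 * exp (-x ^ 2) - erfc x =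
      ∫ t in Ioi x, exp (-t ^ 2) * erfcGapFactor t := by
  have i1 := (integrable_mul_exp_neg_mul_sq one_pos).integrableOn (s := Ioi x)
  have i2 := ((integrable_mul_exp_neg_mul_sq two_pos).const_mul 2).integrableOn (s := Ioi x)
  have i3 := ((integrable_exp_neg_mul_sq one_pos).const_mul (2 / √π)).integrableOn (s := Ioi x)
  have h1 := integral_Ioi_mul_exp_neg_mul_sq one_pos x
  simp only [neg_mul, one_mul] at i1 i3 h1
  simp_rw [exp_neg_sq_mul_erfcGapFactor]
  have i12 : IntegrableOn (fun t => t * exp (-t ^ 2) + 2 * (t * exp (-2 * t ^ 2))) (Ioi x) :=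
    i1.add i2
  rw [integral_sub i12 i3, integral_add i1 i2, integral_const_mul, integral_const_mul, h1,
    integral_Ioi_mul_exp_neg_mul_sq two_pos, erfc_eq_integral_Ioi]
  ring_nf

/-- For every `x > 0`, `erfc x < (1/2)·exp(−2x²) + (1/2)·exp(−x²)`. -/
theorem erfc_lt_half_exp_add (x : ℝ) (hx : 0 < x) :
    erfc x < 1 / 2 * Real.exp (-(2 * x ^ 2)) + 1 / 2 * Real.exp (-x ^ 2) := by
  obtain ⟨c, hc⟩ := exists_erfcGapFactor_eq_zero
  have h_zero : ∫ t in Ioi 0, exp (-t ^ 2) * erfcGapFactor t = 0 := by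
    rw [← half_exp_add_half_exp_sub_erfc]
    norm_num [erfc, erf]
  rw [← sub_pos, half_exp_add_half_exp_sub_erfc]
  refine integral_Ioi_pos_of_sign_change integrable_exp_neg_sq_mul_erfcGapFactor.integrableOn
    h_zero (c := c) (fun t ht => ?_) (fun t ht => ?_) hx
  · exact mul_neg_of_pos_of_neg (exp_pos _) (hc ▸ erfcGapFactor_strictMono ht.2)
  · exact mul_pos (exp_pos _) (hc ▸ erfcGapFactor_strictMono ht)
end

section
/- Craig's formula: for every x ≥ 0, erfc(x) = (2/π) · ∫₀^{π/2} exp(−x² / sin²θ) dθ. -/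
open Real

/-!
Both sides of Craig's formula are continuous and equal `1` at `x = 0`, so it suffices to compare
derivatives for `x > 0`. Differentiating under the integral sign, the derivative of the right-hand side is
`(2/π) ∫₀^{π/2} (-2x / sin²θ) exp(-x² / sin²θ) dθ`; the substitution `θ = π/2 - arctan t`
(so that `sin²θ = 1/(1+t²)`) turns this into the half-line Gaussian integral
`-(4x/π) e^{-x²} ∫₀^∞ e^{-x² t²} dt = -(2/√π) e^{-x²} = erfc' x`.
-/

open MeasureTheory Set Filter

theorem hasDerivAt_erfc (x : ℝ) : HasDerivAt erfc (-(2 / √π * exp (-x ^ 2))) x := by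
  have hc : Continuous fun t : ℝ => exp (-t ^ 2) := by fun_prop
  exact ((hc.integral_hasStrictDerivAt 0 x).hasDerivAt.const_mul _).const_sub 1

theorem erfc_zero : erfc 0 = 1 := by simp [erfc, erf]

theorem exp_neg_div_div_le_inv {c : ℝ} (hc : 0 < c) (s : ℝ) : exp (-c / s) / s ≤ c⁻¹ := by
  rcases le_or_gt s 0 with hs | hs
  · exact (div_nonpos_of_nonneg_of_nonpos (exp_pos _).le hs).trans (inv_pos.2 hc).le
  have hle : c / s ≤ exp (c / s) := by linarith [add_one_le_exp (c / s)]
  calc exp (-c / s) / s = c⁻¹ * (c / s * exp (-(c / s))) := by field_simp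
    _ ≤ c⁻¹ * (exp (c / s) * exp (-(c / s))) := by gcongr
    _ = c⁻¹ := by rw [← exp_add, add_neg_cancel, exp_zero, mul_one]

theorem integral_comp_sin_sq_eq_integral_Ioi {E : Type*} [NormedAddCommGroup E] [NormedSpace ℝ E]
    (g : ℝ → E) :
    ∫ θ in (0:ℝ)..π / 2, g (sin θ ^ 2) = ∫ t in Ioi 0, (1 + t ^ 2)⁻¹ • g (1 + t ^ 2)⁻¹ := by
  have himage : (fun t => π / 2 - arctan t) '' Ioi 0 = Ioo 0 (π / 2) := by
    ext θ
    constructor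
    · rintro ⟨t, ht, rfl⟩
      exact ⟨by linarith [arctan_lt_pi_div_two t], by linarith [arctan_pos.2 (mem_Ioi.1 ht)]⟩
    · rintro ⟨h0, hpi⟩
      refine ⟨tan (π / 2 - θ), tan_pos_of_pos_of_lt_pi_div_two (by linarith) (by linarith), ?_⟩
      simp only [arctan_tan (by linarith : -(π / 2) < π / 2 - θ) (by linarith), sub_sub_cancel]
  have hderiv : ∀ t ∈ Ioi (0:ℝ),
      HasDerivWithinAt (fun t => π / 2 - arctan t) (-(1 + t ^ 2)⁻¹) (Ioi 0) t := fun t _ => by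
    simpa [one_div] using ((hasDerivAt_arctan t).const_sub (π / 2)).hasDerivWithinAt
  have hinj : InjOn (fun t => π / 2 - arctan t) (Ioi 0) := fun a _ b _ h =>
    arctan_injective (by simpa using h)
  rw [intervalIntegral.integral_of_le (by positivity), integral_Ioc_eq_integral_Ioo, ← himage,
    integral_image_eq_integral_abs_deriv_smul measurableSet_Ioi hderiv hinj]
  refine setIntegral_congr_fun measurableSet_Ioi fun t _ => ?_
  rw [sin_pi_div_two_sub, cos_sq_arctan, abs_neg, abs_of_pos (by positivity), one_div]

noncomputable def craigIntegral (x : ℝ) : ℝ := ∫ θ in (0:ℝ)..π / 2, exp (-x ^ 2 / sin θ ^ 2)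

theorem craigIntegral_zero : craigIntegral 0 = π / 2 := by simp [craigIntegral]

theorem norm_exp_neg_sq_div_sin_sq_le_one (x θ : ℝ) : ‖exp (-x ^ 2 / sin θ ^ 2)‖ ≤ 1 := by
  rw [norm_of_nonneg (exp_pos _).le, exp_le_one_iff, neg_div]
  exact neg_nonpos.2 (by positivity)

theorem continuous_craigIntegral : Continuous craigIntegral :=
  intervalIntegral.continuous_of_dominated_interval (bound := fun _ => 1)
    (fun _ => (by fun_prop : Measurable _).aestronglyMeasurable)
    (fun x => .of_forall fun θ _ => norm_exp_neg_sq_div_sin_sq_le_one x θ)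
    intervalIntegrable_const (.of_forall fun θ _ => by fun_prop)

theorem integral_exp_neg_sq_div_sin_sq_mul {x : ℝ} (hx : 0 < x) :
    ∫ θ in (0:ℝ)..π / 2, exp (-x ^ 2 / sin θ ^ 2) * (-(2 * x) / sin θ ^ 2) =
      -√π * exp (-x ^ 2) := by
  have hsubst := integral_comp_sin_sq_eq_integral_Ioi fun s => exp (-x ^ 2 / s) * (-(2 * x) / s)
  simp only [smul_eq_mul, div_inv_eq_mul] at hsubst
  have hgauss : ∀ t : ℝ, (1 + t ^ 2)⁻¹ * (exp (-x ^ 2 * (1 + t ^ 2)) * (-(2 * x) * (1 + t ^ 2)))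
      = -(2 * x) * exp (-x ^ 2) * exp (-x ^ 2 * t ^ 2) := fun t => by
    rw [show -x ^ 2 * (1 + t ^ 2) = -x ^ 2 + -x ^ 2 * t ^ 2 by ring, exp_add]
    field_simp
  simp only [hsubst, hgauss, integral_const_mul, integral_gaussian_Ioi, sqrt_div pi_pos.le]
  rw [sqrt_sq hx.le]
  field_simp

theorem hasDerivAt_craigIntegral {x : ℝ} (hx : 0 < x) :
    HasDerivAt craigIntegral (-√π * exp (-x ^ 2)) x := by
  have hball : ∀ y ∈ Metric.ball x (x / 2), x / 2 < y := fun y hy => by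
    rw [Metric.mem_ball, Real.dist_eq, abs_lt] at hy; linarith
  have key := intervalIntegral.hasDerivAt_integral_of_dominated_loc_of_deriv_le
    (F := fun y θ => exp (-y ^ 2 / sin θ ^ 2))
    (F' := fun y θ => exp (-y ^ 2 / sin θ ^ 2) * (-(2 * y) / sin θ ^ 2))
    (bound := fun _ => 4 / x) (μ := volume) (a := 0) (b := π / 2)
    (Metric.ball_mem_nhds x (half_pos hx))
    (.of_forall fun _ => (by fun_prop : Measurable _).aestronglyMeasurable)
    (intervalIntegrable_const.mono_fun (by fun_prop : Measurable _).aestronglyMeasurable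
      (.of_forall fun θ => (norm_exp_neg_sq_div_sin_sq_le_one x θ).trans_eq (norm_one (α := ℝ)).symm))
    (by fun_prop : Measurable _).aestronglyMeasurable ?_ intervalIntegrable_const ?_
  · rw [integral_exp_neg_sq_div_sin_sq_mul hx] at key
    exact key.2
  · refine .of_forall fun θ _ y hy => ?_
    have hy0 : 0 < y := (half_pos hx).trans (hball y hy)
    calc ‖exp (-y ^ 2 / sin θ ^ 2) * (-(2 * y) / sin θ ^ 2)‖
        = 2 * y * (exp (-y ^ 2 / sin θ ^ 2) / sin θ ^ 2) := by
          rw [norm_mul, norm_div, norm_neg, norm_of_nonneg (exp_pos _).le,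
            norm_of_nonneg (by positivity), norm_of_nonneg (by positivity)]
          ring
      _ ≤ 2 * y * (y ^ 2)⁻¹ := by gcongr; exact exp_neg_div_div_le_inv (by positivity) _
      _ = 2 / y := by field_simp
      _ ≤ 4 / x := by rw [div_le_div_iff₀ hy0 hx]; linarith [hball y hy]
  · refine .of_forall fun θ _ y _ => ?_
    simpa using ((hasDerivAt_pow 2 y).neg.div_const (sin θ ^ 2)).exp

/-- Craig's formula: for every `x ≥ 0`,
`erfc x = (2/π) · ∫₀^{π/2} exp(−x² / sin²θ) dθ`. -/
theorem craig_formula (x : ℝ) (hx : 0 ≤ x) :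
    erfc x = 2 / Real.pi *
      ∫ θ in (0:ℝ)..(Real.pi / 2), Real.exp (-x ^ 2 / Real.sin θ ^ 2) := by
  set Φ : ℝ → ℝ := fun y => erfc y - 2 / π * craigIntegral y
  suffices Φ x = 0 from sub_eq_zero.1 this
  have hΦ_zero : Φ 0 = 0 := by
    simp only [Φ, erfc_zero, craigIntegral_zero]
    field_simp
    ring
  have hΦ_cont : Continuous Φ :=
    (continuous_iff_continuousAt.2 fun y => (hasDerivAt_erfc y).continuousAt).sub
      (continuous_const.mul continuous_craigIntegral)
  have hΦ_deriv : ∀ y ∈ Ioo 0 x, HasDerivAt Φ 0 y := fun y hy => by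
    refine ((hasDerivAt_erfc y).sub
      ((hasDerivAt_craigIntegral hy.1).const_mul (2 / π))).congr_deriv ?_
    field_simp
    rw [sq_sqrt pi_pos.le]
    ring
  rcases hx.eq_or_lt with rfl | hx
  · exact hΦ_zero
  obtain ⟨c, -, hslope⟩ :=
    exists_hasDerivAt_eq_slope Φ (fun _ => 0) hx hΦ_cont.continuousOn hΦ_deriv
  rw [hΦ_zero, sub_zero, eq_comm, div_eq_zero_iff] at hslope
  exact hslope.resolve_right (sub_ne_zero.2 hx.ne')
end

section
/- Let ε > 0, let δ > 0, and let d be a real number satisfying erfc(d) + erfc(√(d² + ε)) = 2δ. Then δ < erfc(d) < 2δ. (Equivalently, inverfc(2δ) < d < inverfc(δ): the solution d defining the optimal Gaussian noise amount σ_pDP-OPT = (d + √(d² + ε))·Δ/(ε√2) for (ε,δ)-probabilistic differential privacy lies strictly between inverfc(2δ) and inverfc(δ).) -/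
open Real

lemma gauss_cont : Continuous (fun t : ℝ => Real.exp (-t ^ 2)) := by
  exact (Real.continuous_exp.comp (continuous_pow 2).neg)

lemma gauss_intble (a b : ℝ) :
    IntervalIntegrable (fun t : ℝ => Real.exp (-t ^ 2)) MeasureTheory.volume a b :=
  gauss_cont.intervalIntegrable a b

lemma gauss_intbleOn (s : Set ℝ) :
    MeasureTheory.IntegrableOn (fun t : ℝ => Real.exp (-t ^ 2)) s := by
  have : MeasureTheory.Integrable (fun t : ℝ => Real.exp (-1 * t ^ 2)) :=
    integrable_exp_neg_mul_sq one_pos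
  simpa using this.integrableOn

lemma erf_strictMono : StrictMono erf := by
  intro a b hab
  unfold erf
  have hsplit := intervalIntegral.integral_add_adjacent_intervals
    (gauss_intble 0 a) (gauss_intble a b)
  have hpos : 0 < ∫ t in a..b, Real.exp (-t ^ 2) :=
    intervalIntegral.intervalIntegral_pos_of_pos (gauss_intble a b)
      (fun x => Real.exp_pos _) hab
  have hc : 0 < 2 / Real.sqrt Real.pi := by positivity
  nlinarith [hc]

lemma erf_lt_one (x : ℝ) : erf x < 1 := by
  rcases le_or_gt x 0 with hx | hx
  · have : erf x ≤ erf 0 := (erf_strictMono.le_iff_le).2 hx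
    have h0 : erf 0 = 0 := by simp [erf]
    linarith
  · unfold erf
    have hIoc : ∫ t in (0:ℝ)..x, Real.exp (-t ^ 2)
        = ∫ t in Set.Ioc 0 x, Real.exp (-t ^ 2) :=
      intervalIntegral.integral_of_le hx.le
    have hIoi : ∫ t in Set.Ioi (0:ℝ), Real.exp (-t ^ 2) = Real.sqrt Real.pi / 2 := by
      have := integral_gaussian_Ioi 1
      simpa using this
    have hsplit : ∫ t in Set.Ioi (0:ℝ), Real.exp (-t ^ 2)
        = (∫ t in Set.Ioc 0 x, Real.exp (-t ^ 2))
          + ∫ t in Set.Ioi x, Real.exp (-t ^ 2) := by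
      rw [← Set.Ioc_union_Ioi_eq_Ioi hx.le]
      exact MeasureTheory.setIntegral_union Set.Ioc_disjoint_Ioi_same
        measurableSet_Ioi (gauss_intbleOn _) (gauss_intbleOn _)
    have htail : 0 < ∫ t in Set.Ioi x, Real.exp (-t ^ 2) := by
      rw [MeasureTheory.setIntegral_pos_iff_support_of_nonneg_ae]
      · have : (Function.support fun t : ℝ => Real.exp (-t ^ 2)) = Set.univ := by
          ext t; simp [Function.support, Real.exp_ne_zero]
        rw [this, Set.univ_inter]
        simp
      · filter_upwards with t using (Real.exp_pos _).le
      · exact gauss_intbleOn _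
    have hlt : ∫ t in (0:ℝ)..x, Real.exp (-t ^ 2) < Real.sqrt Real.pi / 2 := by
      rw [hIoc]; linarith
    have hc : 0 < 2 / Real.sqrt Real.pi := by positivity
    have := mul_lt_mul_of_pos_left hlt hc
    have heq : 2 / Real.sqrt Real.pi * (Real.sqrt Real.pi / 2) = 1 := by
      have hπ : Real.sqrt Real.pi ≠ 0 := ne_of_gt (Real.sqrt_pos.2 Real.pi_pos)
      field_simp
    linarith

lemma erfc_pos (x : ℝ) : 0 < erfc x := by
  have := erf_lt_one x; unfold erfc; linarith

lemma erfc_strictAnti : StrictAnti erfc := fun a b h => by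
  have := erf_strictMono h; unfold erfc; linarith

/-- Let `ε > 0`, `δ > 0`, and let `d` satisfy `erfc d + erfc (√(d² + ε)) = 2δ`. Then
`δ < erfc d < 2δ`. -/
theorem pDP_OPT_solution_bounds (ε δ d : ℝ) (hε : 0 < ε) (hδ : 0 < δ)
    (hd : erfc d + erfc (Real.sqrt (d ^ 2 + ε)) = 2 * δ) :
    δ < erfc d ∧ erfc d < 2 * δ := by
  have hlt : d < Real.sqrt (d ^ 2 + ε) := by
    rcases le_or_gt d 0 with h | h
    · exact lt_of_le_of_lt h (Real.sqrt_pos.2 (by positivity))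
    · exact (Real.lt_sqrt h.le).2 (by linarith)
  have h1 : erfc (Real.sqrt (d ^ 2 + ε)) < erfc d := erfc_strictAnti hlt
  have h2 : 0 < erfc (Real.sqrt (d ^ 2 + ε)) := erfc_pos _
  constructor <;> linarith
end
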